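/- arXiv:2408.07914 — 2 statements merged into one kernel-verified Lean document; each statement's English description precedes it below -/
import Mathlib

section
/- Let X be an n₀ × d₀ real matrix, Z an n₀ × (d - d₀) real matrix, and λ > 0, and suppose XXᵀ + ZZᵀ is invertible. Then Xᵀ(XXᵀ + ZZᵀ)⁻¹ - Xᵀ(XXᵀ + λI)⁻¹ = Xᵀ(XXᵀ + ZZᵀ)⁻¹(λI - ZZᵀ)(XXᵀ + λI)⁻¹. Consequently, the first d₀ coordinates of the minimum norm least squares estimator computed from the augmented predictor matrix [X, Z] equal the ridge estimator β̂_λ = Xᵀ(XXᵀ + λI)⁻¹y plus Xᵀ(XXᵀ + ZZᵀ)⁻¹(λI - ZZᵀ)(XXᵀ + λI)⁻¹y. -/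
/-!
With `A = XXᵀ + ZZᵀ` and `B = XXᵀ + λI` (invertible, being positive definite), the identity is
the resolvent identity `A⁻¹ - B⁻¹ = A⁻¹ (B - A) B⁻¹` multiplied by `Xᵀ` on the left, since
`B - A = λI - ZZᵀ`. For the augmented design `W = [X, Z]` one has `WWᵀ = A`, and the first `d₀`
rows of `Wᵀ (WWᵀ)⁻¹` are `Xᵀ A⁻¹`.
-/

open Matrix

namespace Matrix

variable {m n₁ n₂ l R : Type*}

lemma isUnit_mul_transpose_add_smul_one [Fintype m] [Fintype n₁] [DecidableEq m]
    (X : Matrix m n₁ ℝ) {lam : ℝ} (hlam : 0 < lam) :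
    IsUnit (X * Xᵀ + lam • (1 : Matrix m m ℝ)) := by
  have hXX : (X * Xᵀ).PosSemidef := by simpa using posSemidef_self_mul_conjTranspose X
  exact (PosDef.posSemidef_add hXX (PosDef.one.smul hlam)).isUnit

lemma fromCols_mul_transpose_fromCols [Fintype n₁] [Fintype n₂] [Semiring R]
    (X : Matrix m n₁ R) (Z : Matrix m n₂ R) :
    fromCols X Z * (fromCols X Z)ᵀ = X * Xᵀ + Z * Zᵀ := by
  rw [transpose_fromCols, fromCols_mul_fromRows]

lemma transpose_fromCols_mul_mulVec_inl [Fintype m] [Fintype l] [Semiring R] (X : Matrix l n₁ R)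
    (Z : Matrix l n₂ R) (M : Matrix l m R) (y : m → R) (i : n₁) :
    (((fromCols X Z)ᵀ * M) *ᵥ y) (Sum.inl i) = ((Xᵀ * M) *ᵥ y) i := by
  rw [transpose_fromCols, fromRows_mul, fromRows_mulVec, Sum.elim_inl]

end Matrix

theorem stmt6 (n₀ d₀ k : ℕ) (X : Matrix (Fin n₀) (Fin d₀) ℝ)
    (Z : Matrix (Fin n₀) (Fin k) ℝ) (lam : ℝ) (hlam : 0 < lam)
    (hA : IsUnit (X * Xᵀ + Z * Zᵀ).det) :
    Xᵀ * (X * Xᵀ + Z * Zᵀ)⁻¹ - Xᵀ * (X * Xᵀ + lam • 1)⁻¹ =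
      Xᵀ * (X * Xᵀ + Z * Zᵀ)⁻¹ * (lam • 1 - Z * Zᵀ) * (X * Xᵀ + lam • 1)⁻¹ ∧
    ∀ y : Fin n₀ → ℝ, ∀ i : Fin d₀,
      ((Matrix.fromCols X Z)ᵀ *
          (Matrix.fromCols X Z * (Matrix.fromCols X Z)ᵀ)⁻¹).mulVec y (Sum.inl i) =
      (Xᵀ.mulVec ((X * Xᵀ + lam • 1)⁻¹.mulVec y) +
        (Xᵀ * (X * Xᵀ + Z * Zᵀ)⁻¹ * (lam • 1 - Z * Zᵀ) *
          (X * Xᵀ + lam • 1)⁻¹).mulVec y) i := by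
  have hB := isUnit_mul_transpose_add_smul_one X hlam
  have hres : Xᵀ * (X * Xᵀ + Z * Zᵀ)⁻¹ - Xᵀ * (X * Xᵀ + lam • 1)⁻¹ =
      Xᵀ * (X * Xᵀ + Z * Zᵀ)⁻¹ * (lam • 1 - Z * Zᵀ) * (X * Xᵀ + lam • 1)⁻¹ := by
    rw [← Matrix.mul_sub, inv_sub_inv ((isUnit_iff_isUnit_det _).trans (iff_of_true hA hB)),
      add_sub_add_left_eq_sub, Matrix.mul_assoc, Matrix.mul_assoc, Matrix.mul_assoc]
  refine ⟨hres, fun y i => ?_⟩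
  rw [transpose_fromCols_mul_mulVec_inl, fromCols_mul_transpose_fromCols, mulVec_mulVec,
    ← add_mulVec, ← hres, add_sub_cancel]
end

section
/- Let X be an n₀ × d₀ real matrix and W an m × d₀ real matrix such that XᵀX + WᵀW is positive definite. Then every eigenvalue of the matrix S = (XᵀX + WᵀW)⁻¹XᵀX lies in the interval [0, 1]. Moreover, if WᵀW is positive definite, every eigenvalue of S lies in [0, 1), so S - I is invertible; in particular, if β₀ ≠ 0 then Sβ₀ ≠ β₀, i.e., the OLS estimator computed from the data augmented by noise observations is biased. -/
/-!
An eigenvector `v` of `S = (A + B)⁻¹ A` with eigenvalue `μ` satisfies `A v = μ (A + B) v`, so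
`μ = vᵀAv / (vᵀAv + vᵀBv)` is a generalized Rayleigh quotient of two positive semidefinite forms,
hence lies in `[0, 1]`, and in `[0, 1)` when `B` is positive definite. For the bias statement,
`S - 1 = -(A + B)⁻¹ B` is a product of invertible matrices, so `S` has no nonzero fixed vector.
-/

open Matrix

variable {n : Type*} [Fintype n] [DecidableEq n]

theorem Matrix.exists_mulVec_eq_smul_of_mem_spectrum {K : Type*} [Field K] {S : Matrix n n K}
    {μ : K} (h : μ ∈ spectrum K S) : ∃ v ≠ 0, S *ᵥ v = μ • v := by
  rw [← spectrum_toLin', ← Module.End.hasEigenvalue_iff_mem_spectrum] at h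
  obtain ⟨v, hv⟩ := h.exists_hasEigenvector
  exact ⟨v, hv.2, hv.apply_eq_smul⟩

theorem Matrix.PosDef.exists_eq_div_of_mem_spectrum_inv_mul {M A : Matrix n n ℝ} (hM : M.PosDef)
    {μ : ℝ} (hμ : μ ∈ spectrum ℝ (M⁻¹ * A)) :
    ∃ v ≠ 0, μ = (v ⬝ᵥ A *ᵥ v) / (v ⬝ᵥ M *ᵥ v) := by
  obtain ⟨v, hv, hSv⟩ := exists_mulVec_eq_smul_of_mem_spectrum hμ
  have hAv : A *ᵥ v = μ • M *ᵥ v := by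
    rw [← mulVec_smul, ← hSv, mulVec_mulVec, ← Matrix.mul_assoc,
      mul_nonsing_inv _ hM.det_pos.ne'.isUnit, Matrix.one_mul]
  have hMv : 0 < v ⬝ᵥ M *ᵥ v := by simpa using hM.dotProduct_mulVec_pos hv
  refine ⟨v, hv, ?_⟩
  rw [hAv, dotProduct_smul, smul_eq_mul, mul_div_cancel_right₀ _ hMv.ne']

section

variable {A B : Matrix n n ℝ}

theorem Matrix.PosSemidef.spectrum_inv_add_mul_subset_Icc (hA : A.PosSemidef)
    (hB : B.PosSemidef) (hAB : (A + B).PosDef) :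
    spectrum ℝ ((A + B)⁻¹ * A) ⊆ Set.Icc 0 1 := by
  intro μ hμ
  obtain ⟨v, -, rfl⟩ := hAB.exists_eq_div_of_mem_spectrum_inv_mul hμ
  have ha : 0 ≤ v ⬝ᵥ A *ᵥ v := by simpa using hA.dotProduct_mulVec_nonneg v
  have hb : 0 ≤ v ⬝ᵥ B *ᵥ v := by simpa using hB.dotProduct_mulVec_nonneg v
  rw [add_mulVec, dotProduct_add]
  exact ⟨div_nonneg ha (add_nonneg ha hb), div_le_one_of_le₀ (le_add_of_nonneg_right hb)
    (add_nonneg ha hb)⟩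

theorem Matrix.PosSemidef.spectrum_inv_add_mul_subset_Ico (hA : A.PosSemidef)
    (hB : B.PosDef) : spectrum ℝ ((A + B)⁻¹ * A) ⊆ Set.Ico 0 1 := by
  intro μ hμ
  obtain ⟨v, hv, rfl⟩ :=
    (PosDef.posSemidef_add hA hB).exists_eq_div_of_mem_spectrum_inv_mul hμ
  have ha : 0 ≤ v ⬝ᵥ A *ᵥ v := by simpa using hA.dotProduct_mulVec_nonneg v
  have hb : 0 < v ⬝ᵥ B *ᵥ v := by simpa using hB.dotProduct_mulVec_pos hv
  rw [add_mulVec, dotProduct_add]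
  exact ⟨div_nonneg ha (add_nonneg ha hb.le), (div_lt_one (by positivity)).2
    (lt_add_of_pos_right _ hb)⟩

end

section

variable {K : Type*} [Field K] {A B : Matrix n n K}

theorem Matrix.inv_add_mul_sub_one (hAB : IsUnit (A + B)) :
    (A + B)⁻¹ * A - 1 = -((A + B)⁻¹ * B) := by
  rw [← nonsing_inv_mul _ ((isUnit_iff_isUnit_det _).1 hAB), ← Matrix.mul_sub,
    sub_add_cancel_left, Matrix.mul_neg]

theorem Matrix.isUnit_inv_add_mul_sub_one (hAB : IsUnit (A + B)) (hB : IsUnit B) :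
    IsUnit ((A + B)⁻¹ * A - 1) := by
  rw [inv_add_mul_sub_one hAB]
  exact ((isUnit_nonsing_inv_iff.2 hAB).mul hB).neg

theorem Matrix.mulVec_ne_self_of_isUnit_sub_one {S : Matrix n n K} (hS : IsUnit (S - 1))
    {v : n → K} (hv : v ≠ 0) : S *ᵥ v ≠ v := by
  intro h
  refine hv (mulVec_injective_iff_isUnit.2 hS ?_)
  rw [sub_mulVec, one_mulVec, h, sub_self, mulVec_zero]

end

theorem Matrix.posSemidef_transpose_mul_self {m k : Type*} [Fintype m] [Finite k]
    (X : Matrix m k ℝ) : (Xᵀ * X).PosSemidef := by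
  simpa using posSemidef_conjTranspose_mul_self X

theorem stmt8 (n₀ d₀ m : ℕ) (X : Matrix (Fin n₀) (Fin d₀) ℝ)
    (W : Matrix (Fin m) (Fin d₀) ℝ) (hpd : (Xᵀ * X + Wᵀ * W).PosDef) :
    (∀ μ ∈ spectrum ℝ ((Xᵀ * X + Wᵀ * W)⁻¹ * (Xᵀ * X)), μ ∈ Set.Icc (0 : ℝ) 1) ∧
    ((Wᵀ * W).PosDef →
      (∀ μ ∈ spectrum ℝ ((Xᵀ * X + Wᵀ * W)⁻¹ * (Xᵀ * X)), μ ∈ Set.Ico (0 : ℝ) 1) ∧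
      IsUnit ((Xᵀ * X + Wᵀ * W)⁻¹ * (Xᵀ * X) - 1) ∧
      ∀ β₀ : Fin d₀ → ℝ, β₀ ≠ 0 →
        ((Xᵀ * X + Wᵀ * W)⁻¹ * (Xᵀ * X)).mulVec β₀ ≠ β₀) := by
  have hX := posSemidef_transpose_mul_self X
  refine ⟨fun _ hμ ↦
    hX.spectrum_inv_add_mul_subset_Icc (posSemidef_transpose_mul_self W) hpd hμ, fun hW ↦ ?_⟩
  have hS := isUnit_inv_add_mul_sub_one hpd.isUnit hW.isUnit
  exact ⟨fun _ hμ ↦ hX.spectrum_inv_add_mul_subset_Ico hW hμ, hS,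
    fun _ ↦ mulVec_ne_self_of_isUnit_sub_one hS⟩
end
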